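/- arXiv:1011.0211 — 3 statements merged into one kernel-verified Lean document; each statement's English description precedes it below -/
import Mathlib

section
/- Let A be an associative algebra with an element eu such that ad(eu) acts locally finitely, and let M be a topological A-module. Define M^♡ ⊂ M to be the set of elements expressible as finite sums Σ_a Σ_{i≥0} m_{a,i} where (eu − a − i)^{N_a} m_{a,i} = 0 for some N_a, and Σ_i m_{a,i} converges. Then M^♡ is an A-submodule of M, provided each x ∈ A satisfies [eu, x] = d(x)·x for a grading d with integer values (i.e., A is generated by ad(eu)-eigenvectors with integer eigenvalues). -/
/-- The set `M^♡` of elements of a topological module `M` expressible as finite sums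
`Σ_a Σ_{i≥0} m_{a,i}` of generalized `eu`-eigenvectors with eigenvalues `a + i`, where each
series `Σ_i m_{a,i}` converges. -/
def heartSet (A : Type*) [Ring A] [Algebra ℂ A]
    (M : Type*) [AddCommGroup M] [Module A M] [TopologicalSpace M] (eu : A) : Set M :=
  {m | ∃ (T : Finset ℂ) (f : ℂ → ℕ → M) (g : ℂ → M),
    (∀ a ∈ T, ∃ N : ℕ, ∀ i : ℕ, ((eu - algebraMap ℂ A (a + i)) ^ N) • f a i = 0) ∧
    (∀ a ∈ T, Filter.Tendsto (fun n => ∑ i ∈ Finset.range n, f a i)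
      Filter.atTop (nhds (g a))) ∧
    m = ∑ a ∈ T, g a}

/-!
`M^♡` is the sum over `a ∈ ℂ` of the additive submonoids of limits of series `Σ_i m_i` with
`(eu - a - i)^N m_i = 0`, so it is closed under addition. An `ad(eu)`-eigenvector `y` of
eigenvalue `d` satisfies `(eu - c - d) y = y (eu - c)`, so by continuity of `m ↦ y • m` it maps
the `a`-th summand into the `(a + d)`-th. The elements of `A` preserving `M^♡` form a subalgebra
containing these generators, hence all of `A`.
-/

open Filter Topology

theorem smul_mem_iSup_of_forall_smul_mem {ι R M : Type*} [Monoid R] [AddMonoid M]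
    [DistribMulAction R M] {S : ι → AddSubmonoid M} {x : R}
    (h : ∀ i, ∀ v ∈ S i, x • v ∈ ⨆ j, S j) {m : M} (hm : m ∈ ⨆ i, S i) : x • m ∈ ⨆ i, S i :=
  AddSubmonoid.iSup_induction S (motive := fun v => x • v ∈ ⨆ i, S i) hm h
    (by rw [smul_zero]; exact zero_mem _)
    fun v w hv hw => by rw [smul_add]; exact add_mem hv hw

section Heart

variable {A : Type*} [Ring A] [Algebra ℂ A]
  {M : Type*} [AddCommGroup M] [Module A M] [TopologicalSpace M]

def heartComponent [ContinuousAdd M] (eu : A) (a : ℂ) : AddSubmonoid M where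
  carrier := {v | ∃ f : ℕ → M, (∃ N : ℕ, ∀ i : ℕ, (eu - algebraMap ℂ A (a + i)) ^ N • f i = 0) ∧
    Tendsto (fun n => ∑ i ∈ Finset.range n, f i) atTop (𝓝 v)}
  zero_mem' := ⟨0, ⟨0, by simp⟩, by simpa using tendsto_const_nhds⟩
  add_mem' := by
    rintro v w ⟨f, ⟨N, hN⟩, hf⟩ ⟨g, ⟨K, hK⟩, hg⟩
    refine ⟨f + g, ⟨N + K, fun i => ?_⟩, by simpa [Finset.sum_add_distrib] using hf.add hg⟩
    rw [Pi.add_apply, smul_add, pow_add, mul_smul, mul_smul, hK, smul_zero, add_zero, ← mul_smul,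
      (Commute.pow_pow_self _ N K).eq, mul_smul, hN, smul_zero]

theorem coe_iSup_heartComponent [ContinuousAdd M] (eu : A) :
    ((⨆ a, heartComponent eu a : AddSubmonoid M) : Set M) = heartSet A M eu := by
  classical
  ext m
  constructor
  · intro hm
    obtain ⟨F, rfl⟩ := (AddSubmonoid.mem_iSup_iff_exists_dfinsupp' _ m).mp hm
    choose f hf using fun a => (F a).2
    exact ⟨F.support, f, fun a => F a, fun a _ => (hf a).1, fun a _ => (hf a).2, rfl⟩
  · rintro ⟨T, f, g, hnil, hsum, rfl⟩
    exact sum_mem fun a ha => AddSubmonoid.mem_iSup_of_mem a ⟨f a, hnil a ha, hsum a ha⟩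

theorem smul_mem_heartComponent_add [ContinuousAdd M] [ContinuousConstSMul A M]
    {eu y : A} {d : ℂ} (hy : eu * y - y * eu = d • y) {a : ℂ} {v : M}
    (hv : v ∈ heartComponent eu a) : y • v ∈ heartComponent eu (a + d) := by
  obtain ⟨f, ⟨N, hN⟩, hf⟩ := hv
  have hshift (c : ℂ) : SemiconjBy y (eu - algebraMap ℂ A c) (eu - algebraMap ℂ A (c + d)) := by
    have hcomm : eu * y = y * eu + d • y := by rw [← hy]; abel
    rw [SemiconjBy, map_add, mul_sub, sub_mul, add_mul, hcomm, ← Algebra.commutes c y,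
      ← Algebra.smul_def, ← Algebra.smul_def]
    abel
  refine ⟨fun i => y • f i, ⟨N, fun i => ?_⟩, by simpa [Finset.smul_sum] using hf.const_smul y⟩
  rw [add_right_comm, ← mul_smul, ← ((hshift _).pow_right N).eq, mul_smul, hN, smul_zero]

theorem smul_mem_iSup_heartComponent_of_commutator_eq [ContinuousAdd M] [ContinuousConstSMul A M]
    {eu y : A} {d : ℂ} (hy : eu * y - y * eu = d • y) {m : M}
    (hm : m ∈ ⨆ a, heartComponent eu a) : y • m ∈ ⨆ a, heartComponent eu a :=
  smul_mem_iSup_of_forall_smul_mem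
    (fun _ _ hv => AddSubmonoid.mem_iSup_of_mem _ (smul_mem_heartComponent_add hy hv)) hm

theorem smul_mem_iSup_heartComponent [ContinuousAdd M] [ContinuousConstSMul A M] {eu : A}
    (hgen : ∀ x : A, x ∈ Algebra.adjoin ℂ {y : A | ∃ d : ℤ, eu * y - y * eu = d • y}) (x : A)
    {m : M} (hm : m ∈ ⨆ a, heartComponent eu a) : x • m ∈ ⨆ a, heartComponent eu a := by
  induction hgen x using Algebra.adjoin_induction generalizing m with
  | mem y hy =>
    obtain ⟨d, hd⟩ := hy
    rw [← Int.cast_smul_eq_zsmul ℂ] at hd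
    exact smul_mem_iSup_heartComponent_of_commutator_eq hd hm
  | algebraMap c =>
    have hc : eu * algebraMap ℂ A c - algebraMap ℂ A c * eu = (0 : ℂ) • algebraMap ℂ A c := by
      rw [Algebra.commutes, sub_self, zero_smul]
    exact smul_mem_iSup_heartComponent_of_commutator_eq hc hm
  | add x z _ _ hx hz => rw [add_smul]; exact add_mem (hx hm) (hz hm)
  | mul x z _ _ hx hz => rw [mul_smul]; exact hx (hz hm)

end Heart

/-- If `A` is generated by `ad(eu)`-eigenvectors with integer eigenvalues, then `M^♡` is an
`A`-submodule of the topological `A`-module `M`. -/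
theorem stmt_9 (A : Type*) [Ring A] [Algebra ℂ A]
    (M : Type*) [AddCommGroup M] [Module A M] [TopologicalSpace M]
    [ContinuousAdd M] [ContinuousConstSMul A M]
    (eu : A)
    (hgen : ∀ x : A, x ∈ Algebra.adjoin ℂ {y : A | ∃ d : ℤ, eu * y - y * eu = d • y}) :
    ∃ N : Submodule A M, (N : Set M) = heartSet A M eu :=
  ⟨{ toAddSubmonoid := ⨆ a, heartComponent eu a
     smul_mem' := fun x _ hm => smul_mem_iSup_heartComponent hgen x hm },
    coe_iSup_heartComponent eu⟩
end

section
/- Let M be a finitely generated ℂ[[t]]-module equipped with a ℂ-linear operator D such that D(t·m) = t·D(m) + t·m (i.e., D is compatible with t d/dt) and each quotient M/tᵐM is finite-dimensional over ℂ. Then the D-locally-finite part of M decomposes as a direct sum of generalized D-eigenspaces, each finite-dimensional, with eigenvalues lying in finitely many cosets β₁+ℤ, …, β_k+ℤ of ℤ in ℂ. -/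
/-!
Multiplication by `t ^ k` shifts `D`-eigenvalues by `k`:
`(D - μ) (t ^ k m) = t ^ k (D - (μ - k)) m`. Hence, if `μ - k` is not an eigenvalue of the
operator `D̄` induced by `D` on the finite-dimensional space `M / t M`, a generalized
`μ`-eigenvector lying in `t ^ k M` lies in `t ^ (k + 1) M`. Only finitely many `μ - k` are
eigenvalues of `D̄`, so a generalized `μ`-eigenvector lying in `t ^ k₀ M` for `k₀` large lies in
every `t ^ k M`, and vanishes by Krull's intersection theorem. Thus the generalized eigenspace
embeds into `M / t ^ k₀ M`, and every eigenvalue of `D` is an eigenvalue of `D̄` shifted by a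
natural number. The remaining assertions are linear algebra over an algebraically closed field.
-/

open Module Pointwise

theorem Submodule.mapQ_sub_smul_one_pow_apply {K M : Type*} [CommRing K] [AddCommGroup M]
    [Module K M]
    (p : Submodule K M) (f : End K M) (h : p ≤ p.comap f) (c : K) (n : ℕ) (x : M) :
    ((p.mapQ p f h - c • 1) ^ n) (p.mkQ x) = p.mkQ (((f - c • 1) ^ n) x) := by
  have h' : p ≤ p.comap (f - c • 1) := fun x hx ↦ p.sub_mem (h hx) (p.smul_mem c hx)
  have : p.mapQ p f h - c • 1 = p.mapQ p (f - c • 1) h' := by ext; simp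
  rw [this, ← mapQ_pow]
  rfl

theorem AddSubgroup.exists_fin_coset_reps {A : Type*} [AddCommGroup A] (G : AddSubgroup A)
    {S : Set A} (hS : S.Finite) :
    ∃ (r : ℕ) (β : Fin r → A), (∀ i j, i ≠ j → β i - β j ∉ G) ∧ ∀ s ∈ S, ∃ i, s - β i ∈ G := by
  classical
  let Q : Finset (A ⧸ G) := hS.toFinset.image (↑)
  refine ⟨Q.card, fun i ↦ (Q.equivFin.symm i : A ⧸ G).out, fun i j hij hG ↦ hij ?_, fun s hs ↦ ?_⟩
  · refine Q.equivFin.symm.injective (Subtype.ext ?_)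
    rw [← QuotientAddGroup.out_eq' (Q.equivFin.symm i : A ⧸ G),
      ← QuotientAddGroup.out_eq' (Q.equivFin.symm j : A ⧸ G)]
    exact QuotientAddGroup.eq_iff_sub_mem.mpr hG
  · have hsQ : (s : A ⧸ G) ∈ Q := Finset.mem_image_of_mem _ (hS.mem_toFinset.mpr hs)
    refine ⟨Q.equivFin ⟨s, hsQ⟩, QuotientAddGroup.eq_iff_sub_mem.mp ?_⟩
    simp only [Equiv.symm_apply_apply, QuotientAddGroup.out_eq']

namespace Module.End

variable {K V : Type*} [Field K] [AddCommGroup V] [Module K V]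

theorem mem_of_pow_apply_mem_of_injective [FiniteDimensional K V] {g : End K V}
    (hg : Function.Injective g) {W : Submodule K V} (hW : W ≤ W.comap g) (n : ℕ) {x : V}
    (hx : (g ^ n) x ∈ W) : x ∈ W := by
  have hgn : Function.Injective (g ^ n) := by
    rw [Module.End.coe_pow]; exact hg.iterate n
  obtain ⟨w, hw⟩ := LinearMap.injective_iff_surjective.mp
    (fun a b hab ↦ Subtype.ext (hgn (congrArg Subtype.val hab)) :
      Function.Injective ((g ^ n).restrict (W.le_comap_pow_of_le_comap hW n))) ⟨_, hx⟩
  rw [← hgn (congrArg Subtype.val hw)]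
  exact w.2

theorem eventually_not_hasEigenvalue_sub_natCast [CharZero K] [FiniteDimensional K V]
    (f : End K V) (μ : K) : ∀ᶠ k : ℕ in Filter.atTop, ¬ f.HasEigenvalue (μ - k) := by
  rw [← Nat.cofinite_eq_atTop]
  exact (f.finite_hasEigenvalue.preimage
    (fun a _ b _ h ↦ by exact_mod_cast sub_right_injective h)).eventually_cofinite_notMem

theorem le_iSup_maxGenEigenspace_of_finiteDimensional [IsAlgClosed K] (f : End K V)
    (W : Submodule K V) [FiniteDimensional K W] (hW : ∀ v ∈ W, f v ∈ W) :
    W ≤ ⨆ μ, f.maxGenEigenspace μ :=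
  calc W = (⨆ μ, maxGenEigenspace (f.restrict hW) μ).map W.subtype := by
        rw [iSup_maxGenEigenspace_eq_top, Submodule.map_subtype_top]
    _ = ⨆ μ, (maxGenEigenspace (f.restrict hW) μ).map W.subtype := Submodule.map_iSup _ _
    _ ≤ ⨆ μ, f.maxGenEigenspace μ := iSup_mono fun μ ↦ by
        rw [maxGenEigenspace, genEigenspace_restrict]
        exact Submodule.map_comap_le _ _

theorem mem_iSup_maxGenEigenspace_iff [IsAlgClosed K] (f : End K V)
    (hfin : ∀ μ, FiniteDimensional K (f.maxGenEigenspace μ)) (m : V) :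
    (∃ W : Submodule K V, FiniteDimensional K W ∧ m ∈ W ∧ ∀ v ∈ W, f v ∈ W) ↔
      m ∈ ⨆ μ, f.maxGenEigenspace μ := by
  refine ⟨fun ⟨W, _, hmW, hW⟩ ↦ le_iSup_maxGenEigenspace_of_finiteDimensional f W hW hmW,
    fun hm ↦ ?_⟩
  obtain ⟨s, hs⟩ := Submodule.mem_iSup_iff_exists_finset.mp hm
  refine ⟨⨆ μ ∈ s, f.maxGenEigenspace μ, ?_, hs, fun v hv ↦ ?_⟩
  · rw [← Finset.sup_eq_iSup]
    infer_instance
  · have hinv : ⨆ μ ∈ s, f.maxGenEigenspace μ ≤ (⨆ μ ∈ s, f.maxGenEigenspace μ).comap f :=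
      iSup₂_le fun μ hμ _ hx ↦ Submodule.mem_iSup_of_mem μ <| Submodule.mem_iSup_of_mem hμ <|
        mapsTo_maxGenEigenspace_of_comm (Commute.refl f) μ hx
    exact hinv hv

end Module.End

section EulerOperator

variable {K R M : Type*} [Field K] [CommRing R] [AddCommGroup M] [Module R M] [Module K M]

def IsEulerOperator (t : R) (D : M →ₗ[K] M) : Prop :=
  ∀ m, D (t • m) = t • D m + t • m

namespace IsEulerOperator

variable {t : R} {D : M →ₗ[K] M}

theorem apply_pow_smul (hD : IsEulerOperator t D) (k : ℕ) (m : M) :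
    D (t ^ k • m) = t ^ k • D m + (k : K) • t ^ k • m := by
  induction k generalizing m with
  | zero => simp
  | succ k ih =>
    rw [pow_succ, mul_smul, ih, hD, smul_add, mul_smul, Nat.cast_succ, add_smul, one_smul]
    abel

end IsEulerOperator

variable [Algebra K R] [IsScalarTower K R M]

variable (K M) in
def adicFiltration (t : R) (k : ℕ) : Submodule K M :=
  (Ideal.span {t} ^ k • (⊤ : Submodule R M)).restrictScalars K

theorem mem_adicFiltration {t : R} {k : ℕ} {x : M} :
    x ∈ adicFiltration K M t k ↔ ∃ m, t ^ k • m = x := by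
  rw [adicFiltration, Submodule.restrictScalars_mem, Ideal.span_singleton_pow,
    Submodule.ideal_span_singleton_smul, Submodule.mem_smul_pointwise_iff_exists]
  simp

theorem adicFiltration_antitone (t : R) : Antitone (adicFiltration K M t) :=
  fun _ _ h _ hx ↦ Submodule.smul_mono_left (Ideal.pow_le_pow_right h) hx

theorem eq_zero_of_forall_mem_adicFiltration [IsNoetherianRing R] [IsLocalRing R]
    [Module.Finite R M] {t : R} (ht : ¬ IsUnit t) {x : M}
    (hx : ∀ k, x ∈ adicFiltration K M t k) : x = 0 := by
  have hKrull := Ideal.iInf_pow_smul_eq_bot_of_isLocalRing (M := M) (Ideal.span {t})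
    (by rwa [Ne, Ideal.span_singleton_eq_top])
  rw [← Submodule.mem_bot R, ← hKrull, Submodule.mem_iInf]
  exact hx

namespace IsEulerOperator

variable {t : R} {D : M →ₗ[K] M}

theorem sub_smul_one_pow_apply_pow_smul (hD : IsEulerOperator t D) (μ : K) (k n : ℕ) (m : M) :
    ((D - μ • 1) ^ n) (t ^ k • m) = t ^ k • ((D - (μ - k) • 1) ^ n) m := by
  have hsemi : SemiconjBy (t ^ k • 1 : End K M) (D - (μ - k) • 1) (D - μ • 1) := by
    ext m
    simp only [sub_smul, smul_one_mul, smul_sub, smul_comm (t ^ k), LinearMap.sub_apply,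
      LinearMap.smul_apply, End.one_apply, End.mul_apply, hD.apply_pow_smul]
    abel
  simpa using congr($((hsemi.pow_right n).eq) m).symm

theorem le_comap_adicFiltration (hD : IsEulerOperator t D) (k : ℕ) :
    adicFiltration K M t k ≤ (adicFiltration K M t k).comap D := fun x hx ↦ by
  obtain ⟨m, rfl⟩ := mem_adicFiltration.mp hx
  rw [Submodule.mem_comap, hD.apply_pow_smul]
  exact add_mem (mem_adicFiltration.mpr ⟨_, rfl⟩)
    (Submodule.smul_mem _ _ (mem_adicFiltration.mpr ⟨_, rfl⟩))

def reduction (hD : IsEulerOperator t D) : End K (M ⧸ adicFiltration K M t 1) :=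
  Submodule.mapQ _ _ D (hD.le_comap_adicFiltration 1)

theorem mem_adicFiltration_succ_of_mem_maxGenEigenspace (hD : IsEulerOperator t D)
    [FiniteDimensional K (M ⧸ adicFiltration K M t 1)] {μ : K} {k : ℕ}
    (hμ : ¬ hD.reduction.HasEigenvalue (μ - k)) {v : M} (hvk : v ∈ adicFiltration K M t k)
    (hv : v ∈ Module.End.maxGenEigenspace D μ) : v ∈ adicFiltration K M t (k + 1) := by
  obtain ⟨m, rfl⟩ := mem_adicFiltration.mp hvk
  obtain ⟨n, hn⟩ := (Module.End.mem_maxGenEigenspace D μ _).mp hv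
  set p := adicFiltration K M t 1
  -- `W ⊇ t M` is `(D - (μ - k))`-stable; as `D̄ - (μ - k)` is bijective on the finite-dimensional
  -- image of `W` in `M / t M`, `(D - (μ - k)) ^ n m ∈ W` forces `m ∈ W`.
  set W := (adicFiltration K M t (k + 1)).comap (t ^ k • 1 : End K M)
  have hmem_W {x : M} : x ∈ W ↔ t ^ k • x ∈ adicFiltration K M t (k + 1) := by simp [W]
  have hpW : p ≤ W := fun x hx ↦ by
    obtain ⟨y, rfl⟩ := mem_adicFiltration.mp hx
    rw [hmem_W, smul_smul, ← pow_add]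
    exact mem_adicFiltration.mpr ⟨y, rfl⟩
  have hW : W ≤ W.comap (D - (μ - k) • 1) := fun x hx ↦ by
    obtain ⟨y, hy⟩ := mem_adicFiltration.mp (hmem_W.mp hx)
    have hxk := hD.sub_smul_one_pow_apply_pow_smul μ k 1 x
    have hyk := hD.sub_smul_one_pow_apply_pow_smul μ (k + 1) 1 y
    simp only [pow_one] at hxk hyk
    rw [Submodule.mem_comap, hmem_W, ← hxk, ← hy, hyk]
    exact mem_adicFiltration.mpr ⟨_, rfl⟩
  have hmW : ((D - (μ - k) • 1) ^ n) m ∈ W := by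
    rw [hmem_W, ← hD.sub_smul_one_pow_apply_pow_smul, hn]
    exact zero_mem _
  have hinj : Function.Injective (hD.reduction - (μ - k) • (1 : End K (M ⧸ p))) := by
    have hker := not_not.mp (Module.End.hasEigenvalue_iff.not.mp hμ)
    rwa [Module.End.eigenspace_def, LinearMap.ker_eq_bot] at hker
  have hWq :
      W.map p.mkQ ≤ (W.map p.mkQ).comap (hD.reduction - (μ - k) • (1 : End K (M ⧸ p))) := by
    rintro _ ⟨x, hx, rfl⟩
    have := p.mapQ_sub_smul_one_pow_apply D (hD.le_comap_adicFiltration 1) (μ - k) 1 x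
    rw [pow_one, pow_one] at this
    rw [Submodule.mem_comap, reduction, this]
    exact Submodule.mem_map_of_mem (hW hx)
  have hmq : p.mkQ m ∈ W.map p.mkQ := by
    refine Module.End.mem_of_pow_apply_mem_of_injective hinj hWq n ?_
    rw [reduction, p.mapQ_sub_smul_one_pow_apply]
    exact Submodule.mem_map_of_mem hmW
  rw [← Submodule.mem_comap, Submodule.comap_map_mkQ, sup_eq_right.mpr hpW, hmem_W] at hmq
  exact hmq

theorem eq_zero_of_mem_maxGenEigenspace [IsNoetherianRing R] [IsLocalRing R] [Module.Finite R M]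
    (ht : ¬ IsUnit t) (hD : IsEulerOperator t D)
    [FiniteDimensional K (M ⧸ adicFiltration K M t 1)] {μ : K} {k₀ : ℕ}
    (hμ : ∀ k ≥ k₀, ¬ hD.reduction.HasEigenvalue (μ - k)) {v : M}
    (hv : v ∈ Module.End.maxGenEigenspace D μ) (hvk : v ∈ adicFiltration K M t k₀) : v = 0 := by
  refine eq_zero_of_forall_mem_adicFiltration (K := K) ht fun k ↦ ?_
  rcases le_total k₀ k with h | h
  · induction k, h using Nat.le_induction with
    | base => exact hvk
    | succ k hk ih => exact hD.mem_adicFiltration_succ_of_mem_maxGenEigenspace (hμ k hk) ih hv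
  · exact adicFiltration_antitone t h hvk

theorem finiteDimensional_maxGenEigenspace [CharZero K] [IsNoetherianRing R] [IsLocalRing R]
    [Module.Finite R M] (ht : ¬ IsUnit t) (hD : IsEulerOperator t D)
    [∀ k, FiniteDimensional K (M ⧸ adicFiltration K M t k)] (μ : K) :
    FiniteDimensional K (Module.End.maxGenEigenspace D μ) := by
  obtain ⟨k₀, hk₀⟩ :=
    Filter.eventually_atTop.mp (hD.reduction.eventually_not_hasEigenvalue_sub_natCast μ)
  refine FiniteDimensional.of_injective
    ((adicFiltration K M t k₀).mkQ.comp (Module.End.maxGenEigenspace D μ).subtype)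
    (LinearMap.ker_eq_bot.mp (LinearMap.ker_eq_bot'.mpr fun v hv ↦ Subtype.ext ?_))
  exact hD.eq_zero_of_mem_maxGenEigenspace ht hk₀ v.2 ((Submodule.Quotient.mk_eq_zero _).mp hv)

theorem exists_hasEigenvalue_reduction [IsNoetherianRing R] [IsLocalRing R] [Module.Finite R M]
    (ht : ¬ IsUnit t) (hD : IsEulerOperator t D)
    [FiniteDimensional K (M ⧸ adicFiltration K M t 1)] {μ : K}
    (hμ : Module.End.maxGenEigenspace D μ ≠ ⊥) : ∃ k : ℕ, hD.reduction.HasEigenvalue (μ - k) := by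
  by_contra! h
  refine hμ ((Submodule.eq_bot_iff _).mpr fun v hv ↦ ?_)
  exact hD.eq_zero_of_mem_maxGenEigenspace (k₀ := 0) ht (fun k _ ↦ h k) hv
    (mem_adicFiltration.mpr ⟨v, by simp⟩)

end IsEulerOperator

end EulerOperator

/-- Let `M` be a finitely generated `ℂ[[t]]`-module with an operator `D` satisfying
`D(t·m) = t·D(m) + t·m` and with all quotients `M/tᵏM` finite-dimensional. Then the
`D`-locally-finite part of `M` is the (direct) sum of the generalized `D`-eigenspaces, each
finite-dimensional, with eigenvalues lying in finitely many cosets of `ℤ` in `ℂ`. -/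
theorem stmt_12 (M : Type*) [AddCommGroup M] [Module (PowerSeries ℂ) M]
    [Module.Finite (PowerSeries ℂ) M]
    [Module ℂ M] [IsScalarTower ℂ (PowerSeries ℂ) M]
    (D : M →ₗ[ℂ] M)
    (hD : ∀ m : M, D ((PowerSeries.X : PowerSeries ℂ) • m)
        = (PowerSeries.X : PowerSeries ℂ) • D m + (PowerSeries.X : PowerSeries ℂ) • m)
    (hfd : ∀ k : ℕ, FiniteDimensional ℂ
      (M ⧸ ((Ideal.span {(PowerSeries.X : PowerSeries ℂ)}) ^ k •
        (⊤ : Submodule (PowerSeries ℂ) M)))) :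
    (∃ (r : ℕ) (β : Fin r → ℂ),
      (∀ i j, i ≠ j → ∀ z : ℤ, β i - β j ≠ (z : ℂ)) ∧
      (∀ μ : ℂ, Module.End.maxGenEigenspace D μ ≠ ⊥ → ∃ i : Fin r, ∃ z : ℤ, μ = β i + z)) ∧
    (∀ μ : ℂ, FiniteDimensional ℂ (Module.End.maxGenEigenspace D μ)) ∧
    iSupIndep (fun μ : ℂ => Module.End.maxGenEigenspace D μ) ∧
    (∀ m : M, (∃ Wm : Submodule ℂ M,
        FiniteDimensional ℂ Wm ∧ m ∈ Wm ∧ ∀ v ∈ Wm, D v ∈ Wm)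
      ↔ m ∈ ⨆ μ : ℂ, Module.End.maxGenEigenspace D μ) := by
  have hX : ¬ IsUnit (PowerSeries.X : PowerSeries ℂ) := fun h ↦ by
    simpa using PowerSeries.isUnit_constantCoeff _ h
  have hE : IsEulerOperator PowerSeries.X D := hD
  have hquot (k : ℕ) : FiniteDimensional ℂ (M ⧸ adicFiltration ℂ M PowerSeries.X k) :=
    have := hfd k
    (Submodule.Quotient.restrictScalarsEquiv ℂ
      (Ideal.span {PowerSeries.X} ^ k • (⊤ : Submodule (PowerSeries ℂ) M))).symm.finiteDimensional
  have hfin := hE.finiteDimensional_maxGenEigenspace hX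
  refine ⟨?_, hfin, Module.End.independent_maxGenEigenspace D,
    Module.End.mem_iSup_maxGenEigenspace_iff D hfin⟩
  obtain ⟨r, β, hβ, hcover⟩ :=
    (Int.castAddHom ℂ).range.exists_fin_coset_reps hE.reduction.finite_hasEigenvalue
  refine ⟨r, β, fun i j hij z hz ↦ hβ i j hij ⟨z, by simp [hz]⟩, fun μ hμ ↦ ?_⟩
  obtain ⟨k, hk⟩ := hE.exists_hasEigenvalue_reduction hX hμ
  obtain ⟨i, z, hz⟩ := hcover _ hk
  rw [Int.coe_castAddHom] at hz
  exact ⟨i, z + k, by push_cast; linear_combination -hz⟩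
end

section
/- Let V be a finite-dimensional ℂ-vector space with an operator E acting locally finitely, and let ι : V → ℂ[t,t⁻¹] ⊗ V send each generalized E-eigenvector v of eigenvalue α to t^{φ(α)−α} ⊗ v for a fixed section φ : ℂ/ℤ → ℂ. Then the induced map ℂ[t,t⁻¹] ⊗ ι(V) → ℂ[t,t⁻¹] ⊗ V is injective. -/
open TensorProduct in
/-- If `ι : V → ℂ[t,t⁻¹] ⊗ V` sends each generalized `E`-eigenvector `v` of eigenvalue `α` to
`t^{φ(α)−α} ⊗ v` for a fixed section `φ : ℂ/ℤ → ℂ`, then the induced map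
`ℂ[t,t⁻¹] ⊗ ι(V) → ℂ[t,t⁻¹] ⊗ V`, `f ⊗ v ↦ f·ι(v)`, is injective. -/
theorem stmt_13 (V : Type*) [AddCommGroup V] [Module ℂ V] [FiniteDimensional ℂ V]
    (E : Module.End ℂ V)
    (φ : ℂ → ℂ) (hφ₁ : ∀ z : ℂ, ∃ n : ℤ, φ z = z + n)
    (hφ₂ : ∀ z w : ℂ, (∃ n : ℤ, z - w = (n : ℂ)) → φ z = φ w)
    (ι : V →ₗ[ℂ] (LaurentPolynomial ℂ ⊗[ℂ] V))
    (hι : ∀ (a : ℂ), ∀ v ∈ Module.End.maxGenEigenspace E a,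
      ∀ k : ℤ, (k : ℂ) = φ a - a → ι v = LaurentPolynomial.T k ⊗ₜ[ℂ] v)
    (Φ : LaurentPolynomial ℂ ⊗[ℂ] V →ₗ[ℂ] LaurentPolynomial ℂ ⊗[ℂ] V)
    (hΦ : ∀ (f : LaurentPolynomial ℂ) (v : V), Φ (f ⊗ₜ[ℂ] v) = f • ι v) :
    Function.Injective Φ := by
  classical
  set L := LaurentPolynomial ℂ with hL
  set W := fun a : ℂ => E.maxGenEigenspace a with hW
  have internal : DirectSum.IsInternal W :=
    DirectSum.isInternal_submodule_of_iSupIndep_of_iSup_eq_top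
      E.independent_maxGenEigenspace E.iSup_maxGenEigenspace_eq_top
  let dec : V ≃ₗ[ℂ] DirectSum ℂ (fun a => W a) :=
    (LinearEquiv.ofBijective (DirectSum.coeLinearMap W) internal).symm
  let ka : ℂ → ℤ := fun a => (hφ₁ a).choose
  have hka : ∀ a, ((ka a : ℤ) : ℂ) = φ a - a := by
    intro a
    have := (hφ₁ a).choose_spec
    rw [this]; ring
  let J : V →ₗ[ℂ] L ⊗[ℂ] V :=
    (DirectSum.toModule ℂ ℂ (L ⊗[ℂ] V)
      (fun a => (TensorProduct.mk ℂ L V (LaurentPolynomial.T (-ka a))).comp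
        (W a).subtype)).comp dec.toLinearMap
  have hJ : ∀ a : ℂ, ∀ v ∈ W a, J v = LaurentPolynomial.T (-ka a) ⊗ₜ[ℂ] v := by
    intro a v hv
    have hdec : dec v = DirectSum.lof ℂ ℂ (fun a => W a) a ⟨v, hv⟩ := by
      rw [LinearEquiv.symm_apply_eq]
      show v = DirectSum.coeLinearMap W (DirectSum.lof ℂ ℂ (fun a => W a) a ⟨v, hv⟩)
      exact (DirectSum.toModule_lof (R := ℂ) (N := V) (φ := fun i => (W i).subtype) a ⟨v, hv⟩).symm
    show (DirectSum.toModule ℂ ℂ (L ⊗[ℂ] V) _) (dec v) = _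
    rw [hdec, DirectSum.toModule_lof]
    rfl
  let B : L →ₗ[ℂ] V →ₗ[ℂ] L ⊗[ℂ] V :=
    { toFun := fun f => f • J
      map_add' := fun f g => add_smul f g J
      map_smul' := fun c f => smul_assoc c f J }
  let Ψ : L ⊗[ℂ] V →ₗ[ℂ] L ⊗[ℂ] V := TensorProduct.lift B
  have hΨ : ∀ (f : L) (v : V), Ψ (f ⊗ₜ[ℂ] v) = f • J v := by
    intro f v
    simp [Ψ, B]
  have hΨsmul : ∀ (f : L) (x : L ⊗[ℂ] V), Ψ (f • x) = f • Ψ x := by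
    intro f x
    induction x using TensorProduct.induction_on with
    | zero => simp
    | tmul g v =>
        rw [smul_tmul', hΨ, hΨ, smul_eq_mul, mul_smul]
    | add x y hx hy => rw [smul_add, map_add, hx, hy, map_add, smul_add]
  have hΨι : ∀ v : V, Ψ (ι v) = (1 : L) ⊗ₜ[ℂ] v := by
    have hle : (⊤ : Submodule ℂ V) ≤
        LinearMap.eqLocus (Ψ.comp ι) (TensorProduct.mk ℂ L V 1) := by
      rw [← E.iSup_maxGenEigenspace_eq_top]
      refine iSup_le fun a v hv => ?_
      have hk : ι v = LaurentPolynomial.T (ka a) ⊗ₜ[ℂ] v := hι a v hv (ka a) (hka a)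
      show Ψ (ι v) = (1 : L) ⊗ₜ[ℂ] v
      rw [hk, hΨ, hJ a v hv, smul_tmul', smul_eq_mul, ← LaurentPolynomial.T_add,
        add_neg_cancel, LaurentPolynomial.T_zero]
    intro v
    exact hle (Submodule.mem_top (x := v))
  have key : ∀ x, Ψ (Φ x) = x := by
    intro x
    induction x using TensorProduct.induction_on with
    | zero => simp
    | tmul f v =>
        rw [hΦ, hΨsmul, hΨι, smul_tmul', smul_eq_mul, mul_one]
    | add x y hx hy => rw [map_add, map_add, hx, hy]
  exact Function.LeftInverse.injective key
end
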